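/- arXiv:2604.18108 — 2 statements merged into one kernel-verified Lean document; each statement's English description precedes it below -/
import Mathlib

section
/- (Characterization of the no-transfer rule) A rule φ on linear hierarchy problems with needs satisfies highest rank independence and equal treatment of equals if and only if φ_i(M, r, z) = r_i for every problem and every agent i. -/
/-- A valid linear hierarchy problem with needs. -/
def Valid (m : ℕ) (r z : ℕ → ℝ) : Prop :=
  0 < m ∧ ∀ i < m, 0 ≤ z i ∧ z i ≤ r i

/-!
Let agent `n` be the highest rank of a problem with `m = n + 1` agents and pick `j < n`. Giving
agent `n` the claim and need of agent `j` leaves the allocations of agents `0, …, n - 1` unchanged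
(highest rank independence) and makes agent `n` receive what `j` receives (equal treatment), so
balance of the modified problem says that the surplus `φ_j - r_j` equals the total deficit
`∑_{k < n} (r_k - φ_k)` of the lower agents. Summing over `j` gives
`(n + 1) · ∑_{k < n} (φ_k - r_k) = 0`, so every lower agent receives its claim, and then so does
agent `n` by balance.
-/

open Finset Function

theorem Finset.eq_zero_of_forall_add_sum_eq_zero {ι K : Type*} [Field K] [CharZero K]
    {s : Finset ι} {f : ι → K} (h : ∀ j ∈ s, f j + ∑ k ∈ s, f k = 0) :
    ∀ j ∈ s, f j = 0 := by
  have hsum : (#s + 1 : K) * ∑ k ∈ s, f k = 0 := by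
    have := sum_congr rfl h
    rw [sum_add_distrib, sum_const, nsmul_eq_mul, sum_const_zero] at this
    linear_combination this
  have hsum0 : ∑ k ∈ s, f k = 0 :=
    (mul_eq_zero.mp hsum).resolve_left (by norm_cast)
  intro j hj
  simpa [hsum0] using h j hj

theorem Valid.update_copy {m k j : ℕ} {r z : ℕ → ℝ} (hv : Valid m r z) (hj : j < m) :
    Valid m (update r k (r j)) (update z k (z j)) := by
  refine ⟨hv.1, fun i hi => ?_⟩
  rcases eq_or_ne i k with rfl | hne
  · simpa using hv.2 j hj
  · simpa [update_of_ne hne] using hv.2 i hi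

section Rule

variable (φ : ℕ → (ℕ → ℝ) → (ℕ → ℝ) → ℕ → ℝ)

def IsBalanced : Prop :=
  ∀ m r z, Valid m r z → ∑ i ∈ range m, φ m r z i = ∑ i ∈ range m, r i

def HighestRankIndependent : Prop :=
  ∀ m r z r' z', Valid m r z → Valid m r' z' →
    (∀ i, i + 1 < m → r i = r' i ∧ z i = z' i) →
    ∀ i, i + 1 < m → φ m r z i = φ m r' z' i

def EqualTreatmentOfEquals : Prop :=
  ∀ m r z, Valid m r z → ∀ i < m, ∀ j < m,
    r i = r j → z i = z j → φ m r z i = φ m r z j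

variable {φ}

theorem IsBalanced.sum_lower_add_last {n : ℕ} {r z : ℕ → ℝ} (hbal : IsBalanced φ)
    (hv : Valid (n + 1) r z) :
    ∑ k ∈ range n, φ (n + 1) r z k + φ (n + 1) r z n = ∑ k ∈ range n, r k + r n := by
  simpa only [sum_range_succ] using hbal _ _ _ hv

theorem surplus_add_sum_surplus_eq_zero (hbal : IsBalanced φ) (hri : HighestRankIndependent φ)
    (ete : EqualTreatmentOfEquals φ) {n : ℕ} {r z : ℕ → ℝ} (hv : Valid (n + 1) r z)
    {j : ℕ} (hj : j < n) :
    φ (n + 1) r z j - r j + ∑ k ∈ range n, (φ (n + 1) r z k - r k) = 0 := by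
  set r' := update r n (r j)
  set z' := update z n (z j)
  have hv' : Valid (n + 1) r' z' := hv.update_copy (by omega)
  have hlower : ∀ k, k + 1 < n + 1 → φ (n + 1) r z k = φ (n + 1) r' z' k :=
    hri _ _ _ _ _ hv hv' fun k hk => by simp [r', z', update_of_ne (show k ≠ n by omega)]
  have hlast : φ (n + 1) r' z' n = φ (n + 1) r z j := by
    rw [hlower j (by omega)]
    exact (ete _ _ _ hv' j (by omega) n (by omega)
      (by simp [r', update_of_ne (show j ≠ n by omega)])
      (by simp [z', update_of_ne (show j ≠ n by omega)])).symm
  have hbal' := hbal.sum_lower_add_last hv'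
  rw [hlast, sum_congr rfl fun k hk => (hlower k (by have := mem_range.mp hk; omega)).symm,
    sum_congr rfl fun k hk =>
      update_of_ne (show k ≠ n by have := mem_range.mp hk; omega) _ _] at hbal'
  simp only [r', update_self] at hbal'
  rw [sum_sub_distrib]
  linarith

theorem apply_eq_claim_of_hri_ete (hbal : IsBalanced φ) (hri : HighestRankIndependent φ)
    (ete : EqualTreatmentOfEquals φ) {m : ℕ} {r z : ℕ → ℝ} (hv : Valid m r z) :
    ∀ i < m, φ m r z i = r i := by
  obtain ⟨n, rfl⟩ : ∃ n, m = n + 1 := ⟨m - 1, by have := hv.1; omega⟩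
  have hlower : ∀ j < n, φ (n + 1) r z j = r j := fun j hj =>
    sub_eq_zero.mp <| eq_zero_of_forall_add_sum_eq_zero
      (f := fun k => φ (n + 1) r z k - r k)
      (fun k hk => surplus_add_sum_surplus_eq_zero hbal hri ete hv (mem_range.mp hk))
      j (mem_range.mpr hj)
  have hbal' := hbal.sum_lower_add_last hv
  rw [sum_congr rfl fun k hk => hlower k (mem_range.mp hk)] at hbal'
  intro i hi
  rcases Nat.lt_succ_iff_lt_or_eq.mp hi with hi | rfl
  · exact hlower i hi
  · linarith

end Rule

theorem characterization_no_transfer_rule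
    (φ : ℕ → (ℕ → ℝ) → (ℕ → ℝ) → ℕ → ℝ)
    -- φ is a rule: nonnegative allocations satisfying balance
    (hrule : ∀ m r z, Valid m r z →
      (∀ i < m, 0 ≤ φ m r z i) ∧
      ∑ i ∈ Finset.range m, φ m r z i = ∑ i ∈ Finset.range m, r i) :
    -- highest rank independence and equal treatment of equals
    ((∀ m r z r' z', Valid m r z → Valid m r' z' →
        (∀ i, i + 1 < m → r i = r' i ∧ z i = z' i) →
        ∀ i, i + 1 < m → φ m r z i = φ m r' z' i) ∧
     (∀ m r z, Valid m r z → ∀ i < m, ∀ j < m,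
        r i = r j → z i = z j → φ m r z i = φ m r z j))
    ↔
    -- the no-transfer rule
    (∀ m r z, Valid m r z → ∀ i < m, φ m r z i = r i) := by
  have hbal : IsBalanced φ := fun m r z hv => (hrule m r z hv).2
  refine ⟨fun ⟨hri, ete⟩ m r z hv => apply_eq_claim_of_hri_ete hbal hri ete hv,
    fun h => ⟨?_, ?_⟩⟩
  · intro m r z r' z' hv hv' hagree i hi
    rw [h m r z hv i (by omega), h m r' z' hv' i (by omega), (hagree i hi).1]
  · intro m r z hv i hi j hj hr _
    rw [h m r z hv i hi, h m r z hv j hj, hr]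
end

section
/- (Characterization of the need-adjusted balanced-transfer rule) A rule φ on linear hierarchy problems with needs satisfies lowest rank consistency, highest rank independence, highest rank splitting neutrality, and canonical bilateral fairness if and only if φ = φ^{1/2}, the need-adjusted geometric rule with λ = 1/2. -/
/-- The need-adjusted geometric rule with parameter `lam` on the hierarchy
`{0, ..., m-1}` (agent `m-1` is the top-ranked agent). -/
noncomputable def geomRule (lam : ℝ) (m : ℕ) (r z : ℕ → ℝ) (i : ℕ) : ℝ :=
  if i + 1 < m then
    z i + lam * ∑ j ∈ Finset.range (i + 1), (1 - lam) ^ (i - j) * (r j - z j)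
  else
    r i + ∑ j ∈ Finset.range (m - 1), (1 - lam) ^ (m - 1 - j) * (r j - z j)

/-!
Merging the two top agents (splitting neutrality) and forgetting the top agent's data
(independence) reduces every problem, as far as the lowest agent is concerned, to the canonical
bilateral one; so agent `0` always receives `z 0 + (r 0 - z 0) / 2`. Lowest rank consistency
then removes him and hands the rest of `r 0` on to agent `1`. The geometric rule is invariant
under exactly this removal, since absorbing `(1 - λ) (r 0 - z 0)` into agent `1`'s surplus
leaves every `(1 - λ)`-geometric weighted sum unchanged, so induction on the number of agents
(with balance for a single agent) gives `φ = φ^{1/2}`. Conversely `φ^λ` satisfies consistency,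
independence and neutrality for every `λ`, and bilateral fairness for `λ = 1/2`.
-/

open Finset

/-- Agent `0` leaves with `c` and passes the rest of his revenue on to agent `1`. -/
def lowestRankReduction (r : ℕ → ℝ) (c : ℝ) : ℕ → ℝ :=
  fun j => if j = 0 then r 1 + r 0 - c else r (j + 1)

lemma lowestRankReduction_zero (r : ℕ → ℝ) (c : ℝ) :
    lowestRankReduction r c 0 = r 1 + r 0 - c :=
  if_pos rfl

lemma lowestRankReduction_succ (r : ℕ → ℝ) (c : ℝ) (j : ℕ) :
    lowestRankReduction r c (j + 1) = r (j + 2) :=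
  if_neg j.succ_ne_zero

/-- Agents `m - 1` and `m` of an `(m + 1)`-agent problem merged into one top agent. -/
def mergeTop (m : ℕ) (r : ℕ → ℝ) : ℕ → ℝ :=
  fun j => if j = m - 1 then r (m - 1) + r m else r j

abbrev HierarchyRule := ℕ → (ℕ → ℝ) → (ℕ → ℝ) → ℕ → ℝ

def LowestRankConsistency (φ : HierarchyRule) : Prop :=
  ∀ m r z, Valid m r z → 2 ≤ m →
    Valid (m - 1) (lowestRankReduction r (φ m r z 0)) (fun j => z (j + 1)) →
    ∀ i, 1 ≤ i → i < m →
      φ m r z i = φ (m - 1) (lowestRankReduction r (φ m r z 0)) (fun j => z (j + 1)) (i - 1)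

def HighestRankIndependence (φ : HierarchyRule) : Prop :=
  ∀ m r z r' z', Valid m r z → Valid m r' z' →
    (∀ i, i + 1 < m → r i = r' i ∧ z i = z' i) →
    ∀ i, i + 1 < m → φ m r z i = φ m r' z' i

def HighestRankSplittingNeutrality (φ : HierarchyRule) : Prop :=
  ∀ m r z r' z', Valid m r z → Valid (m + 1) r' z' →
    (∀ j, j + 1 < m → r' j = r j ∧ z' j = z j) →
    r' (m - 1) + r' m = r (m - 1) →
    z' (m - 1) + z' m = z (m - 1) →
    ∀ i, i + 1 < m → φ (m + 1) r' z' i = φ m r z i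

def CanonicalBilateralFairness (φ : HierarchyRule) : Prop :=
  ∀ r₁ z₁ : ℝ, 0 ≤ z₁ → z₁ ≤ r₁ →
    φ 2 (fun j => if j = 0 then r₁ else 0) (fun j => if j = 0 then z₁ else 0) 0
        = z₁ + (r₁ - z₁) / 2 ∧
    φ 2 (fun j => if j = 0 then r₁ else 0) (fun j => if j = 0 then z₁ else 0) 1
        = (r₁ - z₁) / 2

section Valid

variable {m : ℕ} {r z : ℕ → ℝ}

lemma valid_canonical {r₁ z₁ : ℝ} (h0 : 0 ≤ z₁) (h1 : z₁ ≤ r₁) :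
    Valid 2 (fun j => if j = 0 then r₁ else 0) (fun j => if j = 0 then z₁ else 0) := by
  refine ⟨two_pos, fun j hj => ?_⟩
  interval_cases j <;> simp [h0, h1]

lemma mergeTop_of_lt {j : ℕ} (hj : j + 1 < m) : mergeTop m r j = r j :=
  if_neg (by omega)

lemma mergeTop_self : mergeTop m r (m - 1) = r (m - 1) + r m :=
  if_pos rfl

lemma Valid.mergeTop (hv : Valid (m + 1) r z) (hm : 0 < m) :
    Valid m (mergeTop m r) (mergeTop m z) := by
  refine ⟨hm, fun j hj => ?_⟩
  by_cases htop : j = m - 1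
  · obtain ⟨ha₀, ha₁⟩ := hv.2 (m - 1) (by omega)
    obtain ⟨hb₀, hb₁⟩ := hv.2 m (by omega)
    simp only [htop, mergeTop_self]
    constructor <;> linarith
  · rw [mergeTop_of_lt (by omega), mergeTop_of_lt (by omega)]
    exact hv.2 j (by omega)

lemma Valid.lowestRankReduction {c : ℝ} (hv : Valid (m + 2) r z) (hc : c ≤ r 0) :
    Valid (m + 1) (lowestRankReduction r c) (fun j => z (j + 1)) := by
  refine ⟨m.succ_pos, fun j hj => ?_⟩
  rcases j with _ | j
  · obtain ⟨hb₀, hb₁⟩ := hv.2 1 (by omega)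
    rw [lowestRankReduction_zero]
    constructor <;> linarith
  · rw [lowestRankReduction_succ]
    exact hv.2 (j + 2) (by omega)

end Valid

/-- Absorbing `d 0` into `d 1` with weight `μ` leaves the `μ`-geometric weighted sum unchanged. -/
lemma sum_pow_mul_eq_of_absorb_first (μ : ℝ) {d d' : ℕ → ℝ} (h0 : d' 0 = d 1 + μ * d 0)
    (hs : ∀ j, d' (j + 1) = d (j + 2)) (n e : ℕ) :
    ∑ j ∈ range (n + 1), μ ^ (n + e - j) * d' j
      = ∑ j ∈ range (n + 2), μ ^ (n + 1 + e - j) * d j := by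
  rw [sum_range_succ', sum_range_succ' _ (n + 1), sum_range_succ' _ n, h0]
  have hsum : ∑ j ∈ range n, μ ^ (n + e - (j + 1)) * d' (j + 1)
      = ∑ j ∈ range n, μ ^ (n + 1 + e - (j + 1 + 1)) * d (j + 1 + 1) :=
    sum_congr rfl fun j _ => by rw [hs]; congr 2; omega
  simp only [Nat.sub_zero]
  rw [hsum, show n + 1 + e - (0 + 1) = n + e by omega, show n + 1 + e = n + e + 1 by omega,
    pow_succ]
  ring

section GeomRule

variable (lam : ℝ) {m : ℕ} (r z : ℕ → ℝ)

lemma geomRule_of_lt {i : ℕ} (hi : i + 1 < m) :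
    geomRule lam m r z i = z i + lam * ∑ j ∈ range (i + 1), (1 - lam) ^ (i - j) * (r j - z j) :=
  if_pos hi

lemma geomRule_top :
    geomRule lam (m + 1) r z m = r m + ∑ j ∈ range m, (1 - lam) ^ (m - j) * (r j - z j) := by
  simp [geomRule]

lemma geomRule_zero (hm : 1 < m) : geomRule lam m r z 0 = z 0 + lam * (r 0 - z 0) := by
  simp [geomRule_of_lt lam r z hm]

lemma geomRule_congr {m' i : ℕ} {r' z' : ℕ → ℝ} (hi : i + 1 < m) (hi' : i + 1 < m')
    (h : ∀ j ≤ i, r j = r' j ∧ z j = z' j) :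
    geomRule lam m r z i = geomRule lam m' r' z' i := by
  rw [geomRule_of_lt lam r z hi, geomRule_of_lt lam r' z' hi', (h i le_rfl).2]
  congr 2
  refine sum_congr rfl fun j hj => ?_
  obtain ⟨hr, hz⟩ := h j (Nat.lt_succ_iff.mp (mem_range.mp hj))
  rw [hr, hz]

lemma geomRule_lowestRankReduction {i : ℕ} (hi : i < m) :
    geomRule lam m (lowestRankReduction r (z 0 + lam * (r 0 - z 0))) (fun j => z (j + 1)) i
      = geomRule lam (m + 1) r z (i + 1) := by
  have key := sum_pow_mul_eq_of_absorb_first (1 - lam)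
    (d := fun j => r j - z j)
    (d' := fun j => lowestRankReduction r (z 0 + lam * (r 0 - z 0)) j - z (j + 1))
    (by simp only [lowestRankReduction_zero]; ring)
    (fun j => by simp only [lowestRankReduction_succ])
  rcases Nat.lt_or_ge (i + 1) m with hlt | hge
  · rw [geomRule_of_lt _ _ _ hlt, geomRule_of_lt _ _ _ (by omega : i + 1 + 1 < m + 1),
      ← key i 0, add_zero]
  · obtain rfl : m = i + 1 := by omega
    rw [geomRule_top, geomRule_top]
    rcases i with _ | n
    · simp only [lowestRankReduction_zero, zero_add, sum_range_zero, sum_range_one]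
      ring
    · rw [lowestRankReduction_succ, key n 1]

end GeomRule

section Characterization

variable {φ : HierarchyRule}

lemma apply_zero_eq_half (hHRI : HighestRankIndependence φ)
    (hHRSN : HighestRankSplittingNeutrality φ) (hCBF : CanonicalBilateralFairness φ) {m : ℕ}
    (hm : 2 ≤ m) {r z : ℕ → ℝ} (hv : Valid m r z) : φ m r z 0 = z 0 + 1 / 2 * (r 0 - z 0) := by
  induction m, hm using Nat.le_induction generalizing r z with
  | base =>
    obtain ⟨hz₀, hzr⟩ := hv.2 0 two_pos
    have hagree : ∀ i, i + 1 < 2 → r i = (if i = 0 then r 0 else 0) ∧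
        z i = (if i = 0 then z 0 else 0) := by
      intro i hi
      obtain rfl : i = 0 := by omega
      simp
    rw [hHRI 2 r z _ _ hv (valid_canonical hz₀ hzr) hagree 0 one_lt_two,
      (hCBF (r 0) (z 0) hz₀ hzr).1]
    ring
  | succ m hm ih =>
    have hv' := hv.mergeTop (by omega)
    rw [hHRSN m _ _ r z hv' hv (fun j hj => ⟨(mergeTop_of_lt hj).symm, (mergeTop_of_lt hj).symm⟩)
      mergeTop_self.symm mergeTop_self.symm 0 (by omega), ih hv', mergeTop_of_lt (by omega),
      mergeTop_of_lt (by omega)]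

theorem eq_geomRule_half_of_axioms
    (hbal : ∀ m r z, Valid m r z → ∑ i ∈ range m, φ m r z i = ∑ i ∈ range m, r i)
    (hLRC : LowestRankConsistency φ) (hHRI : HighestRankIndependence φ)
    (hHRSN : HighestRankSplittingNeutrality φ) (hCBF : CanonicalBilateralFairness φ) :
    ∀ m r z, Valid m r z → ∀ i < m, φ m r z i = geomRule (1 / 2) m r z i := by
  intro m
  induction m with
  | zero => exact fun r z hv => absurd hv.1 (lt_irrefl 0)
  | succ m ih =>
    intro r z hv i hi
    rcases m with _ | m
    · obtain rfl : i = 0 := by omega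
      simpa [geomRule_top] using hbal 1 r z hv
    have hφ₀ := apply_zero_eq_half hHRI hHRSN hCBF (by omega) hv
    rcases i with _ | i
    · rw [hφ₀, geomRule_zero _ _ _ (by omega)]
    have hv' : Valid (m + 1) (lowestRankReduction r (φ (m + 2) r z 0)) (fun j => z (j + 1)) :=
      hv.lowestRankReduction (by linarith [(hv.2 0 (by omega)).2])
    calc φ (m + 2) r z (i + 1)
        = φ (m + 1) (lowestRankReduction r (φ (m + 2) r z 0)) (fun j => z (j + 1)) i :=
          hLRC (m + 2) r z hv (by omega) hv' (i + 1) (by omega) hi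
      _ = geomRule (1 / 2) (m + 1) (lowestRankReduction r (φ (m + 2) r z 0))
            (fun j => z (j + 1)) i := ih _ _ hv' i (by omega)
      _ = geomRule (1 / 2) (m + 2) r z (i + 1) := by
          rw [hφ₀, geomRule_lowestRankReduction _ _ _ (by omega)]

variable {lam : ℝ} (h : ∀ m r z, Valid m r z → ∀ i < m, φ m r z i = geomRule lam m r z i)
include h

lemma lowestRankConsistency_of_eq_geomRule : LowestRankConsistency φ := by
  intro m r z hv hm hv' i hi him
  obtain ⟨m, rfl⟩ : ∃ k, m = k + 2 := ⟨m - 2, by omega⟩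
  obtain ⟨i, rfl⟩ : ∃ k, i = k + 1 := ⟨i - 1, by omega⟩
  change Valid (m + 1) _ _ at hv'
  show φ (m + 2) r z (i + 1) = φ (m + 1) _ _ i
  rw [h _ _ _ hv' i (by omega), h _ _ _ hv 0 (by omega), geomRule_zero _ _ _ (by omega),
    geomRule_lowestRankReduction _ _ _ (by omega), h _ _ _ hv _ him]

lemma highestRankIndependence_of_eq_geomRule : HighestRankIndependence φ := by
  intro m r z r' z' hv hv' hagree i hi
  rw [h _ _ _ hv i (by omega), h _ _ _ hv' i (by omega)]
  exact geomRule_congr _ _ _ hi hi fun j hj => hagree j (by omega)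

lemma highestRankSplittingNeutrality_of_eq_geomRule : HighestRankSplittingNeutrality φ := by
  intro m r z r' z' hv hv' hagree _ _ i hi
  rw [h _ _ _ hv' i (by omega), h _ _ _ hv i (by omega)]
  exact geomRule_congr _ _ _ (by omega) hi fun j hj => hagree j (by omega)

end Characterization

lemma canonicalBilateralFairness_of_eq_geomRule_half {φ : HierarchyRule}
    (h : ∀ m r z, Valid m r z → ∀ i < m, φ m r z i = geomRule (1 / 2) m r z i) :
    CanonicalBilateralFairness φ := by
  intro r₁ z₁ hz hzr
  have hv := valid_canonical hz hzr
  rw [h _ _ _ hv 0 two_pos, h _ _ _ hv 1 one_lt_two]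
  constructor
  · rw [geomRule_zero _ _ _ one_lt_two]
    simp only [↓reduceIte]
    ring
  · rw [geomRule_top (m := 1)]
    simp only [sum_range_one, one_ne_zero, ↓reduceIte]
    ring

theorem characterization_need_adjusted_balanced_transfer_rule
    (φ : ℕ → (ℕ → ℝ) → (ℕ → ℝ) → ℕ → ℝ)
    -- φ is a rule: nonnegative allocations satisfying balance
    (hrule : ∀ m r z, Valid m r z →
      (∀ i < m, 0 ≤ φ m r z i) ∧
      ∑ i ∈ Finset.range m, φ m r z i = ∑ i ∈ Finset.range m, r i) :
    -- lowest rank consistency, highest rank independence,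
    -- highest rank splitting neutrality, and canonical bilateral fairness
    ((∀ m r z, Valid m r z → 2 ≤ m →
        Valid (m - 1)
          (fun j => if j = 0 then r 1 + r 0 - φ m r z 0 else r (j + 1))
          (fun j => z (j + 1)) →
        ∀ i, 1 ≤ i → i < m →
          φ m r z i =
            φ (m - 1)
              (fun j => if j = 0 then r 1 + r 0 - φ m r z 0 else r (j + 1))
              (fun j => z (j + 1)) (i - 1)) ∧
     (∀ m r z r' z', Valid m r z → Valid m r' z' →
        (∀ i, i + 1 < m → r i = r' i ∧ z i = z' i) →
        ∀ i, i + 1 < m → φ m r z i = φ m r' z' i) ∧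
     (∀ m r z r' z', Valid m r z → Valid (m + 1) r' z' →
        (∀ j, j + 1 < m → r' j = r j ∧ z' j = z j) →
        r' (m - 1) + r' m = r (m - 1) →
        z' (m - 1) + z' m = z (m - 1) →
        ∀ i, i + 1 < m → φ (m + 1) r' z' i = φ m r z i) ∧
     (∀ r₁ z₁ : ℝ, 0 ≤ z₁ → z₁ ≤ r₁ →
        φ 2 (fun j => if j = 0 then r₁ else 0) (fun j => if j = 0 then z₁ else 0) 0
            = z₁ + (r₁ - z₁) / 2 ∧
        φ 2 (fun j => if j = 0 then r₁ else 0) (fun j => if j = 0 then z₁ else 0) 1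
            = (r₁ - z₁) / 2))
    ↔
    (∀ m r z, Valid m r z → ∀ i < m, φ m r z i = geomRule (1/2) m r z i) := by
  constructor
  · rintro ⟨hLRC, hHRI, hHRSN, hCBF⟩
    exact eq_geomRule_half_of_axioms (fun m r z hv => (hrule m r z hv).2) hLRC hHRI hHRSN hCBF
  · intro h
    exact ⟨lowestRankConsistency_of_eq_geomRule h, highestRankIndependence_of_eq_geomRule h,
      highestRankSplittingNeutrality_of_eq_geomRule h,
      canonicalBilateralFairness_of_eq_geomRule_half h⟩
end
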